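/- arXiv:chao-dyn/9901031 — 2 statements merged into one kernel-verified Lean document; each statement's English description precedes it below -/
import Mathlib

section
/- Let p be an odd prime that is ramified in K, so that p·O_K = P² for a prime ideal P of O_K, and let k ≥ 1 and 1 ≤ l ≤ 2k be integers. Then the number of residue classes β ∈ O_K/p^k·O_K admitting a representative b ∈ O_K with N(b) ≡ 1 (mod p^k) and b ≡ 1 (mod P^l) equals p^{k + ⌈l/2⌉ − l}. -/
open NumberField Polynomial

/-- quadratic extensions of ℚ are normal -/
theorem aux_quad_normal (K : Type*) [Field K] [NumberField K]
    (hdeg : Module.finrank ℚ K = 2) : Normal ℚ K := by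
  rw [normal_iff]
  intro x
  refine ⟨Algebra.IsIntegral.isIntegral x, ?_⟩
  set q := minpoly ℚ x with hq
  have hmo : q.Monic := minpoly.monic (Algebra.IsIntegral.isIntegral x)
  have hdle : q.natDegree ≤ 2 := hdeg ▸ minpoly.natDegree_le x
  rcases Nat.lt_or_ge q.natDegree 2 with h2 | h2
  · exact Splits.of_natDegree_le_one (by rw [natDegree_map]; exact Nat.lt_succ_iff.mp h2)
  · have hdeg2 : q.natDegree = 2 := le_antisymm hdle h2
    set Q := q.map (algebraMap ℚ K) with hQ
    have hQmo : Q.Monic := hmo.map _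
    have hroot : IsRoot Q x := by
      rw [IsRoot, hQ, eval_map_algebraMap]
      exact minpoly.aeval ℚ x
    obtain ⟨R, hR⟩ := (dvd_iff_isRoot.mpr hroot)
    have hQdeg : Q.natDegree = 2 := by
      rw [hQ, natDegree_map]; exact hdeg2
    have hQne : Q ≠ 0 := hQmo.ne_zero
    have hRne : R ≠ 0 := by rintro rfl; simp [hR] at hQne
    have hRdeg : R.natDegree = 1 := by
      have := hQdeg
      rw [hR, natDegree_mul (X_sub_C_ne_zero x) hRne, natDegree_X_sub_C] at this
      omega
    have hsplit : Splits Q := by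
      rw [hR]
      exact (Splits.X_sub_C _).mul (Splits.of_natDegree_le_one (le_of_eq hRdeg))
    exact hsplit

set_option synthInstance.maxHeartbeats 1000000 in
/-- the conjugation on the ring of integers of a quadratic field, with the norm identity -/
theorem aux_quad_conj (K : Type*) [Field K] [NumberField K] [IsGalois ℚ K]
    (hdeg : Module.finrank ℚ K = 2) :
    ∃ τ : 𝓞 K ≃ₐ[ℤ] 𝓞 K, ∀ b : 𝓞 K, algebraMap ℤ (𝓞 K) (Algebra.norm ℤ b) = b * τ b := by
  classical
  have hcard : Fintype.card (K ≃ₐ[ℚ] K) = 2 := by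
    rw [← Nat.card_eq_fintype_card, IsGalois.card_aut_eq_finrank, hdeg]
  obtain ⟨σ, hσ⟩ := Fintype.exists_ne_of_one_lt_card (by omega) (1 : K ≃ₐ[ℚ] K)
  refine ⟨galRestrict ℤ ℚ K (𝓞 K) σ, fun b => ?_⟩
  have huniv : (Finset.univ : Finset (K ≃ₐ[ℚ] K)) = {1, σ} := by
    symm
    apply Finset.eq_univ_of_card
    rw [hcard, Finset.card_insert_of_notMem (by simpa using hσ.symm), Finset.card_singleton]
  have hprod := prod_galRestrict_eq_norm ℤ ℚ K (𝓞 K) b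
  rw [huniv, Finset.prod_insert (by simpa using hσ.symm), Finset.prod_singleton] at hprod
  have h1 : ((galRestrict ℤ ℚ K (𝓞 K)) 1) b = b := by simp
  rw [h1] at hprod
  rw [hprod]
  congr 1
  apply Int.cast_injective (α := ℚ)
  rw [Algebra.coe_norm_int]
  exact (IsIntegralClosure.algebraMap_mk' (R := ℤ) (B := ℚ) ℤ _ _).symm

/-- lift a function constant on cosets of an ideal to the quotient ring -/
noncomputable def liftFn {R S : Type*} [CommRing R] [CommMonoid S] (I : Ideal R) (g : R →* S)
    (h : ∀ a b : R, a - b ∈ I → g a = g b) : (R ⧸ I) → S := fun β =>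
  Quotient.liftOn' β g fun a b hab =>
    h a b ((Submodule.quotientRel_def I).mp hab)

theorem liftFn_mk {R S : Type*} [CommRing R] [CommMonoid S] (I : Ideal R) (g : R →* S)
    (h : ∀ a b : R, a - b ∈ I → g a = g b) (a : R) :
    liftFn I g h (Ideal.Quotient.mk I a) = g a := rfl

/-- lift a monoid hom constant on cosets of an ideal to the quotient ring -/
noncomputable def liftMH {R S : Type*} [CommRing R] [CommMonoid S] (I : Ideal R) (g : R →* S)
    (h : ∀ a b : R, a - b ∈ I → g a = g b) : (R ⧸ I) →* S where
  toFun := liftFn I g h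
  map_one' := by
    have : (1 : R ⧸ I) = Ideal.Quotient.mk I 1 := rfl
    rw [this, liftFn_mk, map_one]
  map_mul' x y := by
    obtain ⟨a, rfl⟩ := Ideal.Quotient.mk_surjective x
    obtain ⟨b, rfl⟩ := Ideal.Quotient.mk_surjective y
    show liftFn I g h (Ideal.Quotient.mk I a * Ideal.Quotient.mk I b) =
      liftFn I g h (Ideal.Quotient.mk I a) * liftFn I g h (Ideal.Quotient.mk I b)
    rw [← map_mul, liftFn_mk, liftFn_mk, liftFn_mk, map_mul]

theorem liftMH_mk {R S : Type*} [CommRing R] [CommMonoid S] (I : Ideal R) (g : R →* S)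
    (h : ∀ a b : R, a - b ∈ I → g a = g b) (a : R) :
    liftMH I g h (Ideal.Quotient.mk I a) = g a := rfl

/-- first isomorphism counting -/
theorem aux_card_surj {A B : Type*} [Group A] [Group B] (f : A →* B)
    (hf : Function.Surjective f) : Nat.card A = Nat.card B * Nat.card f.ker := by
  rw [Subgroup.card_eq_card_quotient_mul_card_subgroup f.ker]
  congr 1
  exact Nat.card_congr (QuotientGroup.quotientKerEquivOfSurjective f hf).toEquiv


section Quad
variable {K : Type*} [Field K] [NumberField K]

theorem aux_norm_int (hdeg : Module.finrank ℚ K = 2) (n : ℤ) :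
    Algebra.norm ℤ ((n : 𝓞 K)) = n ^ 2 := by
  have h1 : ((n : 𝓞 K)) = algebraMap ℤ (𝓞 K) n := by simp
  rw [h1, Algebra.norm_algebraMap_of_basis (RingOfIntegers.basis K),
    ← Module.finrank_eq_card_chooseBasisIndex, RingOfIntegers.rank, hdeg]

theorem aux_dvd_int (hdeg : Module.finrank ℚ K = 2) {p : ℕ} (hp : p.Prime) {n : ℤ}
    (h : ((p : ℤ) : 𝓞 K) ∣ (n : 𝓞 K)) : (p : ℤ) ∣ n := by
  have hnorm := map_dvd (Algebra.norm ℤ) h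
  rw [aux_norm_int hdeg, aux_norm_int hdeg] at hnorm
  have hpp : Prime (p : ℤ) := Nat.prime_iff_prime_int.mp hp
  have : (p:ℤ) ∣ n ^ 2 := dvd_trans (dvd_pow_self _ two_ne_zero) hnorm
  exact hpp.dvd_of_dvd_pow this

theorem aux_mem_int (hdeg : Module.finrank ℚ K = 2) {p : ℕ} (hp : p.Prime)
    {P : Ideal (𝓞 K)} (hram : Ideal.span {(p : 𝓞 K)} = P ^ 2) :
    ∀ j (n : ℤ), (n : 𝓞 K) ∈ P ^ j → (p : ℤ) ^ ((j+1)/2) ∣ n := by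
  have hp0 : (p : 𝓞 K) ≠ 0 := by
    exact_mod_cast Nat.cast_ne_zero.mpr hp.ne_zero
  have hcast : ((p : ℤ) : 𝓞 K) = (p : 𝓞 K) := by push_cast; ring
  intro j
  induction j using Nat.strong_induction_on with
  | _ j ih =>
    intro n hn
    match j, ih with
    | 0, _ => simpa using (one_dvd n)
    | 1, _ =>
      rw [pow_one] at hn
      have h2 : (n : 𝓞 K) * (n : 𝓞 K) ∈ P ^ 2 := by
        rw [pow_two]; exact Ideal.mul_mem_mul hn hn
      rw [← hram, Ideal.mem_span_singleton] at h2
      have : ((p:ℤ) : 𝓞 K) ∣ ((n * n : ℤ) : 𝓞 K) := by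
        rw [hcast]; push_cast at h2 ⊢; exact h2
      have hd := aux_dvd_int hdeg hp this
      have hpp : Prime (p : ℤ) := Nat.prime_iff_prime_int.mp hp
      have : (p:ℤ) ∣ n := hpp.dvd_of_dvd_pow (n := 2) (by rwa [pow_two])
      simpa using this
    | (j+2), ih =>
      have hmem2 : (n : 𝓞 K) ∈ P ^ 2 := (Ideal.pow_le_pow_right (by omega)) hn
      rw [← hram, Ideal.mem_span_singleton] at hmem2
      have hd : (p:ℤ) ∣ n := aux_dvd_int hdeg hp (by rwa [hcast])
      obtain ⟨n', rfl⟩ := hd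
      have hsplit : P ^ (j+2) = Ideal.span {(p : 𝓞 K)} * P ^ j := by
        rw [hram, ← pow_add]; ring_nf
      rw [hsplit, Ideal.mem_span_singleton_mul] at hn
      obtain ⟨z, hz, hzz⟩ := hn
      have hzn : z = (n' : 𝓞 K) := by
        apply mul_left_cancel₀ hp0
        rw [hzz]; push_cast; ring
      rw [hzn] at hz
      have := ih j (by omega) n' hz
      have hstep : (j+2+1)/2 = (j+1)/2 + 1 := by omega
      rw [hstep, pow_succ, mul_comm]
      exact mul_dvd_mul_left _ this

theorem aux_mem_of_dvd {p : ℕ} {P : Ideal (𝓞 K)}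
    (hram : Ideal.span {(p : 𝓞 K)} = P ^ 2) {j m : ℕ} (h2 : j ≤ 2*m) {n : ℤ}
    (hd : (p : ℤ) ^ m ∣ n) : (n : 𝓞 K) ∈ P ^ j := by
  obtain ⟨t, rfl⟩ := hd
  have h1 : (((p:ℤ)^m * t : ℤ) : 𝓞 K) = ((p : 𝓞 K))^m * ((t : ℤ) : 𝓞 K) := by
    push_cast; ring
  rw [h1]
  have h3 : ((p : 𝓞 K))^m * ((t : ℤ) : 𝓞 K) ∈ Ideal.span {(p : 𝓞 K)} ^ m :=
    Ideal.mul_mem_right _ _ (Ideal.pow_mem_pow (Ideal.mem_span_singleton_self _) m)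
  have h4 : Ideal.span {(p : 𝓞 K)} ^ m = P ^ (2*m) := by
    rw [hram, ← pow_mul, mul_comm]
  rw [h4] at h3
  exact (Ideal.pow_le_pow_right h2) h3




theorem aux_P_ne_bot {p : ℕ} (hp : p.Prime) {P : Ideal (𝓞 K)}
    (hram : Ideal.span {(p : 𝓞 K)} = P ^ 2) : P ≠ ⊥ := by
  intro h
  rw [h] at hram
  have : (p : 𝓞 K) = 0 := by
    have := hram
    rw [show (⊥ : Ideal (𝓞 K)) ^ 2 = ⊥ by rw [pow_two, Ideal.mul_bot]] at this
    rw [Ideal.span_singleton_eq_bot] at this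
    exact this
  have hp0 : (p : 𝓞 K) ≠ 0 := by exact_mod_cast Nat.cast_ne_zero.mpr hp.ne_zero
  exact hp0 this

theorem aux_tau_stab {p : ℕ} (hp : p.Prime) {P : Ideal (𝓞 K)} (hP : P.IsPrime)
    (hram : Ideal.span {(p : 𝓞 K)} = P ^ 2) (τ : 𝓞 K ≃ₐ[ℤ] 𝓞 K) (j : ℕ) {x : 𝓞 K}
    (hx : x ∈ P ^ j) : τ x ∈ P ^ j := by
  have hPbot : P ≠ ⊥ := aux_P_ne_bot hp hram
  have hmax : P.IsMaximal := Ideal.IsPrime.isMaximal hP hPbot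
  set f := (τ : 𝓞 K ≃+* 𝓞 K) with hf
  have hspan : Ideal.map (f : 𝓞 K →+* 𝓞 K) (Ideal.span {(p : 𝓞 K)}) =
      Ideal.span {(p : 𝓞 K)} := by
    rw [Ideal.map_span]
    congr 1
    simp [Set.image_singleton]
  set P' := Ideal.map (f : 𝓞 K →+* 𝓞 K) P with hP'
  have hprime : P'.IsPrime := Ideal.map_isPrime_of_equiv f
  have hsq : P' ^ 2 = P ^ 2 := by
    rw [hP', ← Ideal.map_pow, ← hram, hspan, hram]
  have hle : P ≤ P' := by
    have h1 : P * P ≤ P' := by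
      rw [← pow_two, ← hsq, pow_two]
      exact Ideal.mul_le_right
    rcases (Ideal.IsPrime.mul_le hprime).mp h1 with h | h <;> exact h
  have heq : P = P' := hmax.eq_of_le hprime.ne_top hle
  have : τ x ∈ Ideal.map (f : 𝓞 K →+* 𝓞 K) (P ^ j) := Ideal.mem_map_of_mem _ hx
  rwa [Ideal.map_pow, ← hP', ← heq] at this

theorem aux_absNorm_P (hdeg : Module.finrank ℚ K = 2) {p : ℕ} (hp : p.Prime)
    {P : Ideal (𝓞 K)} (hram : Ideal.span {(p : 𝓞 K)} = P ^ 2) :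
    Ideal.absNorm P = p := by
  have h1 : Ideal.absNorm (Ideal.span {(p : 𝓞 K)}) = p ^ 2 := by
    rw [Ideal.absNorm_span_singleton]
    have : ((p : ℤ) : 𝓞 K) = (p : 𝓞 K) := by push_cast; ring
    rw [← this, aux_norm_int hdeg]
    simp [Int.natAbs_pow]
  rw [hram, map_pow] at h1
  exact Nat.pow_left_injective (by norm_num) h1

theorem aux_card_quot (hdeg : Module.finrank ℚ K = 2) {p : ℕ} (hp : p.Prime)
    {P : Ideal (𝓞 K)} (hram : Ideal.span {(p : 𝓞 K)} = P ^ 2) (j : ℕ) :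
    Nat.card (𝓞 K ⧸ P ^ j) = p ^ j := by
  have : Nat.card (𝓞 K ⧸ P ^ j) = Ideal.absNorm (P ^ j) := by
    rw [Ideal.absNorm_apply, Submodule.cardQuot_apply]
  rw [this, map_pow, aux_absNorm_P hdeg hp hram]

end Quad

set_option maxHeartbeats 2000000 in
set_option synthInstance.maxHeartbeats 1000000 in
/-- let `p` be an odd prime ramified in the real quadratic field `K`,
say `p·O_K = P²` with `P` prime, and `1 ≤ l ≤ 2k`. Then the number of residue classes in
`O_K/p^k·O_K` admitting a representative `b` with `N(b) ≡ 1 (mod p^k)` and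
`b ≡ 1 (mod P^l)` equals `p^(k + ⌈l/2⌉ - l)` (here `⌈l/2⌉ = (l+1)/2` in `ℕ`). -/
theorem card_normOne_congruent_one_ramified
    (K : Type*) [Field K] [NumberField K]
    (hdeg : Module.finrank ℚ K = 2) (hreal : Nonempty (K →+* ℝ))
    (p : ℕ) (hp : p.Prime) (hodd : Odd p)
    (P : Ideal (𝓞 K)) (hP : P.IsPrime) (hram : Ideal.span {(p : 𝓞 K)} = P ^ 2)
    (k l : ℕ) (hk : 1 ≤ k) (hl : 1 ≤ l) (hlk : l ≤ 2 * k) :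
    Set.ncard {β : 𝓞 K ⧸ Ideal.span {((p ^ k : ℕ) : 𝓞 K)} |
        ∃ b : 𝓞 K, Ideal.Quotient.mk (Ideal.span {((p ^ k : ℕ) : 𝓞 K)}) b = β ∧
          Algebra.norm ℤ b ≡ 1 [ZMOD ((p : ℤ) ^ k)] ∧ b - 1 ∈ P ^ l}
      = p ^ (k + (l + 1) / 2 - l) := by
  classical
  haveI : Normal ℚ K := aux_quad_normal K hdeg
  haveI hgal : IsGalois ℚ K := ⟨⟩
  obtain ⟨τ, hτ⟩ := aux_quad_conj K hdeg
  set I : Ideal (𝓞 K) := Ideal.span {((p ^ k : ℕ) : 𝓞 K)} with hIdef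
  have hIP : I = P ^ (2 * k) := by
    rw [hIdef, show ((p ^ k : ℕ) : 𝓞 K) = ((p : 𝓞 K)) ^ k by push_cast; ring,
      ← Ideal.span_singleton_pow, hram, ← pow_mul, mul_comm]
  set m := (l + 1) / 2 with hm
  have hm1 : 1 ≤ m := by omega
  have hmk : m ≤ k := by omega
  have h2m : l ≤ 2 * m := by omega
  haveI : NeZero (p ^ k) := ⟨pow_ne_zero _ hp.ne_zero⟩
  have hppos : 0 < p := hp.pos
  have hcast : ∀ x : ℤ, algebraMap ℤ (𝓞 K) x = (x : 𝓞 K) := fun x => eq_intCast _ x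
  have hI_le : I ≤ P ^ l := by rw [hIP]; exact Ideal.pow_le_pow_right (by omega)
  -- the norm monoid hom
  set g : 𝓞 K →* ZMod (p ^ k) :=
    (Int.castRingHom (ZMod (p ^ k))).toMonoidHom.comp (Algebra.norm ℤ) with hgdef
  have hg : ∀ b : 𝓞 K, g b = ((Algebra.norm ℤ b : ℤ) : ZMod (p ^ k)) := fun b => rfl
  -- invariance of the norm modulo I
  have hinv : ∀ a b : 𝓞 K, a - b ∈ I → g a = g b := by
    intro a b hab
    rw [hIP] at hab
    have h1 : ((Algebra.norm ℤ a - Algebra.norm ℤ b : ℤ) : 𝓞 K) ∈ P ^ (2 * k) := by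
      rw [← hcast, map_sub, hτ a, hτ b,
        show a * τ a - b * τ b = (a - b) * τ a + b * τ (a - b) by rw [map_sub]; ring]
      exact Ideal.add_mem _ (Ideal.mul_mem_right _ _ hab)
        (Ideal.mul_mem_left _ _ (aux_tau_stab hp hP hram τ _ hab))
    have h2 := aux_mem_int hdeg hp hram (2 * k) _ h1
    rw [show (2 * k + 1) / 2 = k by omega] at h2
    rw [hg, hg, ZMod.intCast_eq_intCast_iff]
    exact (Int.modEq_iff_dvd.mpr (by push_cast; exact (dvd_sub_comm.mp h2))).symm.symm
  set ν : (𝓞 K ⧸ I) →* ZMod (p ^ k) := liftMH I g hinv with hν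
  have hνmk : ∀ b : 𝓞 K, ν (Ideal.Quotient.mk I b) = ((Algebra.norm ℤ b : ℤ) : ZMod (p ^ k)) :=
    fun b => liftMH_mk I g hinv b
  set J : Ideal (𝓞 K ⧸ I) := Ideal.map (Ideal.Quotient.mk I) (P ^ l) with hJ
  -- membership transfer
  have hmemJ : ∀ b : 𝓞 K, ((Ideal.Quotient.mk I) b - 1 ∈ J) ↔ b - 1 ∈ P ^ l := by
    intro b
    constructor
    · intro h
      have h' : (Ideal.Quotient.mk I) (b - 1) ∈ J := by rwa [map_sub, map_one]
      rw [hJ, Ideal.mem_map_iff_of_surjective _ Ideal.Quotient.mk_surjective] at h'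
      obtain ⟨a, ha, hab⟩ := h'
      have h2 : b - 1 - a ∈ I := by
        rw [← Ideal.Quotient.eq] ; exact hab.symm
      have h3 := Ideal.add_mem _ ha (hI_le h2)
      rwa [show a + (b - 1 - a) = b - 1 by ring] at h3
    · intro h
      have := Ideal.mem_map_of_mem (Ideal.Quotient.mk I) h
      rw [map_sub, map_one] at this
      exact this
  -- elements congruent to 1 are units
  have hunit : ∀ β : 𝓞 K ⧸ I, β - 1 ∈ J → IsUnit β := by
    intro β hβ
    have hnil : IsNilpotent (β - 1) := by
      refine ⟨2 * k, ?_⟩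
      have h1 : (β - 1) ^ (2 * k) ∈ J ^ (2 * k) := Ideal.pow_mem_pow hβ _
      have h2 : J ^ (2 * k) = ⊥ := by
        rw [hJ, ← Ideal.map_pow, ← pow_mul]
        apply le_bot_iff.mp
        calc Ideal.map (Ideal.Quotient.mk I) (P ^ (l * (2 * k)))
            ≤ Ideal.map (Ideal.Quotient.mk I) I := by
              refine Ideal.map_mono ?_
              rw [hIP]
              exact Ideal.pow_le_pow_right (by nlinarith)
          _ = ⊥ := Ideal.map_quotient_self I
      rw [h2] at h1
      exact Ideal.mem_bot.mp h1
    have h3 := hnil.isUnit_one_add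
    rwa [show (1 : 𝓞 K ⧸ I) + (β - 1) = β by ring] at h3
  -- the subgroup U of units congruent to 1 mod J
  set U : Subgroup (𝓞 K ⧸ I)ˣ :=
    { carrier := {u : (𝓞 K ⧸ I)ˣ | (u : 𝓞 K ⧸ I) - 1 ∈ J}
      one_mem' := by simp
      mul_mem' := by
        intro u v hu hv
        simp only [Set.mem_setOf_eq, Units.val_mul] at *
        rw [show (u : 𝓞 K ⧸ I) * v - 1 = ((u : 𝓞 K ⧸ I) - 1) * v + ((v : 𝓞 K ⧸ I) - 1) by ring]
        exact Ideal.add_mem _ (Ideal.mul_mem_right _ _ hu) hv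
      inv_mem' := by
        intro u hu
        simp only [Set.mem_setOf_eq] at *
        have h1 : ((u⁻¹ : (𝓞 K ⧸ I)ˣ) : 𝓞 K ⧸ I) - 1
            = ((u⁻¹ : (𝓞 K ⧸ I)ˣ) : 𝓞 K ⧸ I) * (1 - (u : 𝓞 K ⧸ I)) := by
          rw [mul_sub, mul_one, Units.inv_mul]
        rw [h1]
        refine Ideal.mul_mem_left _ _ ?_
        rw [show (1 : 𝓞 K ⧸ I) - (u : 𝓞 K ⧸ I) = -((u : 𝓞 K ⧸ I) - 1) by ring]
        exact neg_mem hu } with hU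
  have hUmem : ∀ u : (𝓞 K ⧸ I)ˣ, u ∈ U ↔ ((u : 𝓞 K ⧸ I) - 1 ∈ J) := fun u => Iff.rfl
  -- the ideal J' and subgroup V on the ZMod side
  set J' : Ideal (ZMod (p ^ k)) := Ideal.span {(p : ZMod (p ^ k)) ^ m} with hJ'
  have hunit' : ∀ v : ZMod (p ^ k), v - 1 ∈ J' → IsUnit v := by
    intro v hv
    have hpk0 : (p : ZMod (p ^ k)) ^ k = 0 := by
      rw [show ((p : ZMod (p ^ k)) ^ k) = ((p ^ k : ℕ) : ZMod (p ^ k)) by push_cast; ring,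
        ZMod.natCast_self]
    have hnil : IsNilpotent (v - 1) := by
      refine ⟨k, ?_⟩
      have h1 : (v - 1) ^ k ∈ J' ^ k := Ideal.pow_mem_pow hv _
      have h2 : J' ^ k = ⊥ := by
        rw [hJ', Ideal.span_singleton_pow, ← pow_mul, Ideal.span_singleton_eq_bot]
        have hk_le : k ≤ m * k := Nat.le_mul_of_pos_left k (by omega)
        rw [show m * k = k + (m * k - k) by omega, pow_add, hpk0, zero_mul]
      rw [h2] at h1
      exact Ideal.mem_bot.mp h1
    have h3 := hnil.isUnit_one_add
    rwa [show (1 : ZMod (p ^ k)) + (v - 1) = v by ring] at h3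
  set V : Subgroup (ZMod (p ^ k))ˣ :=
    { carrier := {v : (ZMod (p ^ k))ˣ | (v : ZMod (p ^ k)) - 1 ∈ J'}
      one_mem' := by simp
      mul_mem' := by
        intro u v hu hv
        simp only [Set.mem_setOf_eq, Units.val_mul] at *
        rw [show (u : ZMod (p ^ k)) * v - 1
          = ((u : ZMod (p ^ k)) - 1) * v + ((v : ZMod (p ^ k)) - 1) by ring]
        exact Ideal.add_mem _ (Ideal.mul_mem_right _ _ hu) hv
      inv_mem' := by
        intro u hu
        simp only [Set.mem_setOf_eq] at *
        have h1 : ((u⁻¹ : (ZMod (p ^ k))ˣ) : ZMod (p ^ k)) - 1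
            = ((u⁻¹ : (ZMod (p ^ k))ˣ) : ZMod (p ^ k)) * (1 - (u : ZMod (p ^ k))) := by
          rw [mul_sub, mul_one, Units.inv_mul]
        rw [h1]
        refine Ideal.mul_mem_left _ _ ?_
        rw [show (1 : ZMod (p ^ k)) - (u : ZMod (p ^ k)) = -((u : ZMod (p ^ k)) - 1) by ring]
        exact neg_mem hu } with hV
  have hVmem : ∀ v : (ZMod (p ^ k))ˣ, v ∈ V ↔ ((v : ZMod (p ^ k)) - 1 ∈ J') := fun v => Iff.rfl
  -- norms of U-elements land in V
  have hUV : ∀ u : (𝓞 K ⧸ I)ˣ, u ∈ U → (Units.map ν u : (ZMod (p ^ k))ˣ) ∈ V := by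
    intro u hu
    obtain ⟨b, hb⟩ := Ideal.Quotient.mk_surjective (u : 𝓞 K ⧸ I)
    rw [hUmem, ← hb, hmemJ] at hu
    have h1 : ((Algebra.norm ℤ b - 1 : ℤ) : 𝓞 K) ∈ P ^ l := by
      rw [← hcast, map_sub, hτ b, map_one,
        show b * τ b - 1 = (b - 1) * τ b + τ (b - 1) by rw [map_sub, map_one]; ring]
      exact Ideal.add_mem _ (Ideal.mul_mem_right _ _ hu) (aux_tau_stab hp hP hram τ _ hu)
    have h2 := aux_mem_int hdeg hp hram l _ h1
    rw [← hm] at h2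
    obtain ⟨t, ht⟩ := h2
    rw [hVmem]
    have h3 : (Units.map ν u : (ZMod (p ^ k))ˣ) = ν ((Ideal.Quotient.mk I) b) := by
      rw [hb]; rfl
    rw [h3, hνmk]
    rw [show ((Algebra.norm ℤ b : ℤ) : ZMod (p ^ k)) - 1
      = ((Algebra.norm ℤ b - 1 : ℤ) : ZMod (p ^ k)) by push_cast; ring, ht]
    rw [hJ']
    refine Ideal.mem_span_singleton.mpr ⟨(t : ZMod (p ^ k)), ?_⟩
    push_cast
    ring
  -- the restricted homomorphism
  set fhom : U →* V := MonoidHom.codRestrict ((Units.map ν).comp U.subtype) V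
    (fun u => hUV u.1 u.2) with hfhom
  -- cardinalities
  have hcardR : Nat.card (𝓞 K ⧸ I) = p ^ (2 * k) := by
    rw [hIP]; exact aux_card_quot hdeg hp hram (2 * k)
  have hcardRJ : Nat.card ((𝓞 K ⧸ I) ⧸ J) = p ^ l := by
    have hsup : I ⊔ P ^ l = P ^ l := sup_eq_right.mpr hI_le
    rw [hJ]
    calc Nat.card ((𝓞 K ⧸ I) ⧸ Ideal.map (Ideal.Quotient.mk I) (P ^ l))
        = Nat.card (𝓞 K ⧸ (I ⊔ P ^ l)) :=
          Nat.card_congr (DoubleQuot.quotQuotEquivQuotSup I (P ^ l)).toEquiv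
      _ = p ^ l := by rw [hsup]; exact aux_card_quot hdeg hp hram l
  have hcardJ : Nat.card J = p ^ (2 * k - l) := by
    have h1 : Nat.card (𝓞 K ⧸ I) = Nat.card ((𝓞 K ⧸ I) ⧸ J) * Nat.card J :=
      AddSubgroup.card_eq_card_quotient_mul_card_addSubgroup (α := 𝓞 K ⧸ I) J.toAddSubgroup
    rw [hcardR, hcardRJ] at h1
    rw [show p ^ (2 * k) = p ^ l * p ^ (2 * k - l) by rw [← pow_add]; congr 1; omega] at h1
    exact Nat.eq_of_mul_eq_mul_left (pow_pos hppos l) h1.symm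
  have hcardU : Nat.card U = p ^ (2 * k - l) := by
    rw [← hcardJ]
    apply Nat.card_congr
    refine Equiv.ofBijective (fun u => (⟨(u.1 : 𝓞 K ⧸ I) - 1, u.2⟩ : J)) ⟨?_, ?_⟩
    · intro x y hxy
      have h2 := congrArg Subtype.val hxy
      simp only at h2
      exact Subtype.ext (Units.ext (sub_left_inj.mp h2))
    · intro j
      have hjJ : (1 + (j : 𝓞 K ⧸ I)) - 1 ∈ J := by
        rw [show (1 + (j : 𝓞 K ⧸ I)) - 1 = (j : 𝓞 K ⧸ I) by ring]; exact j.2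
      have hju : IsUnit (1 + (j : 𝓞 K ⧸ I)) := hunit _ hjJ
      refine ⟨⟨hju.unit, ?_⟩, ?_⟩
      · rw [hUmem, IsUnit.unit_spec]; exact hjJ
      · apply Subtype.ext
        simp only
        rw [IsUnit.unit_spec]
        ring
  have hcardJ' : Nat.card J' = p ^ (k - m) := by
    have hset : (J' : Set (ZMod (p ^ k)))
        = (AddSubgroup.zmultiples ((p : ZMod (p ^ k)) ^ m) : Set (ZMod (p ^ k))) := by
      ext z
      simp only [SetLike.mem_coe]
      rw [hJ', Ideal.mem_span_singleton']
      constructor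
      · rintro ⟨a, ha⟩
        obtain ⟨n, rfl⟩ := ZMod.intCast_surjective a
        exact AddSubgroup.mem_zmultiples_iff.mpr ⟨n, by rw [zsmul_eq_mul, ha]⟩
      · intro h
        obtain ⟨n, hn⟩ := AddSubgroup.mem_zmultiples_iff.mp h
        exact ⟨(n : ZMod (p ^ k)), by rw [← hn, zsmul_eq_mul]⟩
    have h1 : Nat.card J' = Nat.card (AddSubgroup.zmultiples ((p : ZMod (p ^ k)) ^ m)) :=
      Nat.card_congr (Equiv.setCongr hset)
    rw [h1, Nat.card_zmultiples,
      show ((p : ZMod (p ^ k)) ^ m) = ((p ^ m : ℕ) : ZMod (p ^ k)) by push_cast; ring,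
      ZMod.addOrderOf_coe _ (NeZero.ne _), Nat.gcd_eq_right (pow_dvd_pow p hmk),
      Nat.pow_div hmk hppos]
  have hcardV : Nat.card V = p ^ (k - m) := by
    rw [← hcardJ']
    apply Nat.card_congr
    refine Equiv.ofBijective (fun v => (⟨(v.1 : ZMod (p ^ k)) - 1, v.2⟩ : J')) ⟨?_, ?_⟩
    · intro x y hxy
      have h2 := congrArg Subtype.val hxy
      simp only at h2
      exact Subtype.ext (Units.ext (sub_left_inj.mp h2))
    · intro j
      have hjJ : (1 + (j : ZMod (p ^ k))) - 1 ∈ J' := by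
        rw [show (1 + (j : ZMod (p ^ k))) - 1 = (j : ZMod (p ^ k)) by ring]; exact j.2
      have hju : IsUnit (1 + (j : ZMod (p ^ k))) := hunit' _ hjJ
      refine ⟨⟨hju.unit, ?_⟩, ?_⟩
      · rw [hVmem, IsUnit.unit_spec]; exact hjJ
      · apply Subtype.ext
        simp only
        rw [IsUnit.unit_spec]
        ring
  -- surjectivity of fhom
  have hVodd : Odd (Nat.card V) := by rw [hcardV]; exact hodd.pow
  have hsq_surj : Function.Surjective (fun w : V => w * w) := by
    have hinj : Function.Injective (fun w : V => w * w) := by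
      intro a b hab
      simp only at hab
      have h1 : (a * b⁻¹) * (a * b⁻¹) = 1 := by
        have h0 : (a * b⁻¹) * (a * b⁻¹) = (a * a) * (b * b)⁻¹ := by
          rw [mul_inv]
          exact mul_mul_mul_comm a b⁻¹ a b⁻¹
        rw [h0, hab]
        group
      have h2 : orderOf (a * b⁻¹) ∣ 2 := orderOf_dvd_of_pow_eq_one (by rw [pow_two]; exact h1)
      have h3 : orderOf (a * b⁻¹) ∣ Nat.card V := orderOf_dvd_natCard _
      have h4 : orderOf (a * b⁻¹) = 1 := by
        rcases (Nat.dvd_prime Nat.prime_two).mp h2 with h | h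
        · exact h
        · exfalso
          rw [h] at h3
          exact (Nat.not_even_iff_odd.mpr hVodd) (even_iff_two_dvd.mpr h3)
      exact mul_inv_eq_one.mp (orderOf_eq_one_iff.mp h4)
    exact Finite.surjective_of_injective hinj
  have hsurj : Function.Surjective fhom := by
    intro v
    obtain ⟨w, hw⟩ := hsq_surj v
    obtain ⟨n, hn⟩ := ZMod.intCast_surjective ((w.1 : ZMod (p ^ k)))
    have hwJ' : ((w.1 : ZMod (p ^ k))) - 1 ∈ J' := (hVmem _).mp w.2
    rw [← hn, hJ', Ideal.mem_span_singleton'] at hwJ'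
    obtain ⟨a, ha⟩ := hwJ'
    obtain ⟨e, rfl⟩ := ZMod.intCast_surjective a
    have hz : (((n - 1 - e * (p : ℤ) ^ m : ℤ)) : ZMod (p ^ k)) = 0 := by
      push_cast
      rw [← ha]
      push_cast
      ring
    rw [ZMod.intCast_zmod_eq_zero_iff_dvd] at hz
    obtain ⟨f1, hf1⟩ := hz
    have hb1 : ((n - 1 : ℤ) : 𝓞 K) ∈ P ^ l := by
      rw [show (n - 1 : ℤ) = e * (p : ℤ) ^ m + ((p ^ k : ℕ) : ℤ) * f1 by linarith [hf1]]
      rw [Int.cast_add]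
      refine Ideal.add_mem _ ?_ ?_
      · exact aux_mem_of_dvd hram h2m (dvd_mul_left _ _)
      · refine aux_mem_of_dvd hram hlk ?_
        push_cast
        exact dvd_mul_right _ _
    have hb1' : ((n : ℤ) : 𝓞 K) - 1 ∈ P ^ l := by
      rw [show ((n : ℤ) : 𝓞 K) - 1 = ((n - 1 : ℤ) : 𝓞 K) by push_cast; ring]
      exact hb1
    have hmkJ : (Ideal.Quotient.mk I) ((n : ℤ) : 𝓞 K) - 1 ∈ J := by
      rw [show (Ideal.Quotient.mk I) ((n : ℤ) : 𝓞 K) - 1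
        = (Ideal.Quotient.mk I) (((n : ℤ) : 𝓞 K) - 1) by rw [map_sub, map_one]]
      exact Ideal.mem_map_of_mem _ hb1'
    have hmkJ2 : (Ideal.Quotient.mk I) ((n : ℤ) : 𝓞 K) - 1 ∈ J := hmkJ
    have hbu : IsUnit ((Ideal.Quotient.mk I) ((n : ℤ) : 𝓞 K)) := hunit _ hmkJ
    have hmemU : hbu.unit ∈ U := by rw [hUmem, IsUnit.unit_spec]; exact hmkJ
    refine ⟨⟨hbu.unit, hmemU⟩, ?_⟩
    apply Subtype.ext
    apply Units.ext
    have h5 : (((fhom ⟨hbu.unit, hmemU⟩ : V) : (ZMod (p ^ k))ˣ) : ZMod (p ^ k))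
        = ν ((hbu.unit : (𝓞 K ⧸ I)ˣ) : 𝓞 K ⧸ I) := rfl
    rw [h5, IsUnit.unit_spec, hνmk, aux_norm_int hdeg n]
    have h6 : (((v : (ZMod (p ^ k))ˣ)) : ZMod (p ^ k))
        = ((w.1 : ZMod (p ^ k))) * ((w.1 : ZMod (p ^ k))) := by
      rw [← hw]; rfl
    rw [h6, ← hn]
    push_cast
    ring
  -- modular condition transfer
  have hmod : ∀ b : 𝓞 K, (Algebra.norm ℤ b ≡ 1 [ZMOD ((p : ℤ) ^ k)])
      ↔ ((Algebra.norm ℤ b : ℤ) : ZMod (p ^ k)) = ((1 : ℤ) : ZMod (p ^ k)) := by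
    intro b
    rw [show ((p : ℤ) ^ k) = ((p ^ k : ℕ) : ℤ) by push_cast; ring,
      ← ZMod.intCast_eq_intCast_iff]
  -- kernel of fhom is in bijection with the set in question
  have hTker : Set.ncard {β : 𝓞 K ⧸ I |
      ∃ b : 𝓞 K, (Ideal.Quotient.mk I) b = β ∧
        Algebra.norm ℤ b ≡ 1 [ZMOD ((p : ℤ) ^ k)] ∧ b - 1 ∈ P ^ l}
      = Nat.card (MonoidHom.ker fhom) := by
    rw [← Nat.card_coe_set_eq]
    refine (Nat.card_congr (Equiv.ofBijective
      (fun x : MonoidHom.ker fhom => (⟨((x.1.1 : (𝓞 K ⧸ I)ˣ) : 𝓞 K ⧸ I), ?_⟩ :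
        {β : 𝓞 K ⧸ I | ∃ b : 𝓞 K, (Ideal.Quotient.mk I) b = β ∧
          Algebra.norm ℤ b ≡ 1 [ZMOD ((p : ℤ) ^ k)] ∧ b - 1 ∈ P ^ l})) ⟨?_, ?_⟩)).symm
    · -- membership
      obtain ⟨b, hb⟩ := Ideal.Quotient.mk_surjective ((x.1.1 : (𝓞 K ⧸ I)ˣ) : 𝓞 K ⧸ I)
      refine ⟨b, hb, ?_, ?_⟩
      · rw [hmod b]
        have hker := x.2
        rw [MonoidHom.mem_ker] at hker
        have hval : ν ((x.1.1 : (𝓞 K ⧸ I)ˣ) : 𝓞 K ⧸ I) = 1 := by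
          have := congrArg (fun z : V => ((z : (ZMod (p ^ k))ˣ) : ZMod (p ^ k))) hker
          exact this
        rw [← hb, hνmk] at hval
        rw [hval, Int.cast_one]
      · exact (hmemJ b).mp (by rw [hb]; exact (hUmem x.1.1).mp x.1.2)
    · intro x y hxy
      have h2 := congrArg Subtype.val hxy
      simp only at h2
      exact Subtype.ext (Subtype.ext (Units.ext h2))
    · rintro ⟨β, b, hb, hn1, hbl⟩
      have hmkJ : (Ideal.Quotient.mk I) b - 1 ∈ J := (hmemJ b).mpr hbl
      have hbu : IsUnit ((Ideal.Quotient.mk I) b) := hunit _ hmkJ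
      have hmemU : hbu.unit ∈ U := by rw [hUmem, IsUnit.unit_spec]; exact hmkJ
      have hkermem : (⟨hbu.unit, hmemU⟩ : U) ∈ MonoidHom.ker fhom := by
        rw [MonoidHom.mem_ker]
        apply Subtype.ext
        apply Units.ext
        have h5 : (((fhom ⟨hbu.unit, hmemU⟩ : V) : (ZMod (p ^ k))ˣ) : ZMod (p ^ k))
            = ν ((hbu.unit : (𝓞 K ⧸ I)ˣ) : 𝓞 K ⧸ I) := rfl
        rw [h5, IsUnit.unit_spec, hνmk]
        rw [hmod b] at hn1
        rw [hn1, Int.cast_one]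
        rfl
      refine ⟨⟨⟨hbu.unit, hmemU⟩, hkermem⟩, ?_⟩
      apply Subtype.ext
      simp only
      rw [IsUnit.unit_spec]
      exact hb
  -- conclusion
  have hiso := aux_card_surj fhom hsurj
  rw [hcardU, hcardV] at hiso
  rw [show p ^ (2 * k - l) = p ^ (k - m) * p ^ (k + m - l) by
    rw [← pow_add]; congr 1; omega] at hiso
  have hfin : Nat.card (MonoidHom.ker fhom) = p ^ (k + m - l) :=
    Nat.eq_of_mul_eq_mul_left (pow_pos hppos _) hiso.symm
  rw [hTker, hfin]
end

section
/- Let A = [[a,b],[c,d]] ∈ SL(2,ℤ) be hyperbolic, i.e. |a+d| > 2, and let α ∈ ℝ be an eigenvalue of A, so α² − (a+d)α + 1 = 0 and α is a unit in the order ℤ[α]. Then there exist elements v₁, v₂ of ℤ[α] ⊂ ℝ which are linearly independent over ℤ and satisfy α·v₁ = a·v₁ + c·v₂ and α·v₂ = b·v₁ + d·v₂; consequently the ℤ-module I = ℤv₁ + ℤv₂ is an ideal of the order ℤ[α] on which multiplication by α has matrix A in the basis (v₁, v₂). -/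
/-- No integer solutions of `p² - tpq + q² = 0` with `q ≠ 0` when `|t| > 2`. -/
lemma no_int_sol (t p q : ℤ) (ht : 2 < |t|) (hq : q ≠ 0)
    (h : p ^ 2 - t * p * q + q ^ 2 = 0) : False := by
  have hg : 0 < Int.gcd p q := Int.gcd_pos_of_ne_zero_right p hq
  set G : ℤ := (Int.gcd p q : ℤ) with hG
  have hG0 : G ≠ 0 := Int.natCast_ne_zero.mpr hg.ne'
  have hdp : G ∣ p := Int.gcd_dvd_left p q
  have hdq : G ∣ q := Int.gcd_dvd_right p q
  set p' : ℤ := p / G with hp'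
  set q' : ℤ := q / G with hq'
  have hp : p = G * p' := (Int.mul_ediv_cancel' hdp).symm
  have hqe : q = G * q' := (Int.mul_ediv_cancel' hdq).symm
  have hco : Int.gcd p' q' = 1 := Int.gcd_div_gcd_div_gcd hg
  have hcop : IsCoprime p' q' := Int.isCoprime_iff_gcd_eq_one.mpr hco
  have h' : p' ^ 2 - t * p' * q' + q' ^ 2 = 0 := by
    have hGG : G ^ 2 * (p' ^ 2 - t * p' * q' + q' ^ 2) = 0 := by
      rw [hp, hqe] at h; linarith [h]
    have h2 : G ^ 2 ≠ 0 := pow_ne_zero _ hG0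
    exact (mul_eq_zero.mp hGG).resolve_left h2
  have hq'dvd : q' ∣ p' ^ 2 := ⟨t * p' - q', by linarith⟩
  have hp'dvd : p' ∣ q' ^ 2 := ⟨t * q' - p', by nlinarith [h']⟩
  have huq : IsUnit q' :=
    (hcop.symm.pow_right (n := 2)).isUnit_of_dvd' dvd_rfl hq'dvd
  have hup : IsUnit p' :=
    (hcop.pow_right (n := 2)).isUnit_of_dvd' dvd_rfl hp'dvd
  have h1 := Int.isUnit_iff.mp huq
  have h2 := Int.isUnit_iff.mp hup
  rcases lt_abs.mp ht with h3 | h3 <;> rcases h1 with e1 | e1 <;>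
    rcases h2 with e2 | e2 <;> rw [e1, e2] at h' <;> omega

/-- let `A = [[a,b],[c,d]] ∈ SL(2,ℤ)` be hyperbolic (`|a+d| > 2`) and let
`α ∈ ℝ` be an eigenvalue of `A` (so `α² - (a+d)α + 1 = 0`). Then there exist
`v₁, v₂ ∈ ℤ[α] ⊂ ℝ`, linearly independent over `ℤ`, with `α·v₁ = a·v₁ + c·v₂` and
`α·v₂ = b·v₁ + d·v₂`; consequently `I = ℤv₁ + ℤv₂` is an ideal of the order `ℤ[α]`
(in particular closed under multiplication by `α`) on which multiplication by `α` has
matrix `A` in the basis `(v₁, v₂)`. Here `ℤ[α] = ℤ + ℤα` since `α` is a quadratic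
integer. -/
theorem exists_ideal_basis (a b c d : ℤ) (hdet : a * d - b * c = 1)
    (hhyp : 2 < |a + d|) (α : ℝ) (hα : α ^ 2 - (a + d : ℤ) * α + 1 = 0) :
    ∃ v₁ v₂ : ℝ,
      (∃ m n : ℤ, v₁ = m + n * α) ∧
      (∃ m n : ℤ, v₂ = m + n * α) ∧
      (∀ m n : ℤ, m * v₁ + n * v₂ = 0 → m = 0 ∧ n = 0) ∧
      α * v₁ = a * v₁ + c * v₂ ∧
      α * v₂ = b * v₁ + d * v₂ ∧
      (∀ w : ℝ, (∃ m n : ℤ, w = m * v₁ + n * v₂) →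
        ∃ m n : ℤ, α * w = m * v₁ + n * v₂) := by
  have hdetR : (a : ℝ) * d - b * c = 1 := by exact_mod_cast hdet
  have hαR : α ^ 2 - ((a : ℝ) + d) * α + 1 = 0 := by push_cast at hα; linarith
  -- c ≠ 0
  have hc : c ≠ 0 := by
    rintro rfl
    have had : a * d = 1 := by simpa using hdet
    rcases Int.mul_eq_one_iff_eq_one_or_neg_one.mp had with ⟨rfl, rfl⟩ | ⟨rfl, rfl⟩ <;>
      simp at hhyp
  have hcR : (c : ℝ) ≠ 0 := Int.cast_ne_zero.mpr hc
  refine ⟨(c : ℝ), α - a, ⟨c, 0, by push_cast; ring⟩, ⟨-a, 1, by push_cast; ring⟩,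
    ?_, by ring, by linear_combination hαR + hdetR, ?_⟩
  · -- linear independence
    intro m n h
    by_cases hn : n = 0
    · subst hn
      refine ⟨?_, rfl⟩
      have hmc : (m : ℝ) * c = 0 := by push_cast at h ⊢; linarith
      rcases mul_eq_zero.mp hmc with h' | h'
      · exact_mod_cast h'
      · exact absurd h' hcR
    · exfalso
      have hna : (n : ℝ) * α = (n : ℝ) * a - m * c := by push_cast at h ⊢; linarith
      set p : ℤ := n * a - m * c with hpdef
      have key : ((p ^ 2 - (a + d) * p * n + n ^ 2 : ℤ) : ℝ) = 0 := by
        push_cast [hpdef]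
        linear_combination (n : ℝ) ^ 2 * hαR -
          ((n : ℝ) * α + ((n : ℝ) * a - m * c) - ((a : ℝ) + d) * n) * hna
      have keyZ : p ^ 2 - (a + d) * p * n + n ^ 2 = 0 := by exact_mod_cast key
      exact no_int_sol (a + d) p n hhyp hn keyZ
  · -- closure under multiplication by α
    rintro w ⟨m, n, rfl⟩
    refine ⟨m * a + n * b, m * c + n * d, ?_⟩
    push_cast
    linear_combination (n : ℝ) * hαR + (n : ℝ) * hdetR
end
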